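/- Let P be a tower of height δ with δ inaccessible. If A ⊆ P is a maximal antichain, then there is a disjoint maximal antichain B refining A (every element of B lies below some element of A); moreover if q ∈ B, p ∈ A, and q ≤ p, then q and p are compatible-equivalent (q forces p ∈ G and p forces q ∈ G). -/

import Mathlib

universe u

/-- `F` is a normal filter on `𝒫(X)` for a set `X` (in the ZF universe): a proper
filter on the powerset of `X` that is fine and closed under diagonal intersections. -/
structure IsNormalFilterZ (X : ZFSet.{u}) (F : Set ZFSet.{u}) : Prop where
  mem_sub : ∀ A ∈ F, A ⊆ X.powerset
  inter_mem : ∀ A ∈ F, ∀ B ∈ F, A ∩ B ∈ F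
  superset_mem : ∀ A ∈ F, ∀ B : ZFSet.{u}, A ⊆ B → B ⊆ X.powerset → B ∈ F
  proper : (∅ : ZFSet.{u}) ∉ F
  fine : ∀ x ∈ X, ZFSet.sep (fun a => x ∈ a) X.powerset ∈ F
  normal : ∀ A : ZFSet.{u} → ZFSet.{u}, (∀ x ∈ X, A x ∈ F) →
    ZFSet.sep (fun a => ∀ x ∈ a, a ∈ A x) X.powerset ∈ F

/-- A tower of normal filters of height `δ`: each `X ∈ V_δ` (i.e. of rank `< δ`)
carries a normal filter `F X` on `𝒫(X)`, and for `X ⊆ Y` the filter `F Y` projects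
to `F X` (`B ∈ F X` iff `{a ⊆ Y : a ∩ X ∈ B} ∈ F Y`). -/
structure TowerZ (δ : Ordinal.{u}) where
  F : ZFSet.{u} → Set ZFSet.{u}
  normal : ∀ X : ZFSet.{u}, X.rank < δ → IsNormalFilterZ X (F X)
  projects : ∀ X Y : ZFSet.{u}, X.rank < δ → Y.rank < δ → X ⊆ Y →
    ∀ B : ZFSet.{u}, B ⊆ X.powerset →
      (B ∈ F X ↔ ZFSet.sep (fun a => a ∩ X ∈ B) Y.powerset ∈ F Y)

/-- The tower ordering: `p ≤ q` iff `⋃ p ⊇ ⋃ q` and every `a ∈ p` satisfies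
`a ∩ ⋃ q ∈ q`. -/
def Tle (p q : ZFSet.{u}) : Prop :=
  ZFSet.sUnion q ⊆ ZFSet.sUnion p ∧ ∀ a ∈ p, a ∩ ZFSet.sUnion q ∈ q

namespace TowerZ

variable {δ : Ordinal.{u}} (T : TowerZ δ)

/-- `S` is `F X`-positive: a subset of `𝒫(X)` whose complement in `𝒫(X)` is not
in `F X`. -/
def Pos (X S : ZFSet.{u}) : Prop :=
  S ⊆ X.powerset ∧ ZFSet.sep (fun a => a ∉ S) X.powerset ∉ T.F X

/-- The conditions of the tower: the sets in `V_δ` positive for some `F X`. -/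
def Cond (S : ZFSet.{u}) : Prop :=
  ∃ X : ZFSet.{u}, X.rank < δ ∧ T.Pos X S

/-- Compatibility in the tower ordering. -/
def Compat (p q : ZFSet.{u}) : Prop :=
  ∃ r : ZFSet.{u}, T.Cond r ∧ Tle r p ∧ Tle r q

/-- `A` is a maximal antichain of the tower. -/
def MaxAC (A : Set ZFSet.{u}) : Prop :=
  (∀ p ∈ A, T.Cond p) ∧ (∀ p ∈ A, ∀ q ∈ A, p ≠ q → ¬ T.Compat p q) ∧
  (∀ p : ZFSet.{u}, T.Cond p → ∃ q ∈ A, T.Compat p q)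

/-- `G` is a generic filter on the tower: a filter on the poset of conditions
meeting every maximal antichain (of the ground model). -/
def Generic (G : Set ZFSet.{u}) : Prop :=
  (∀ p ∈ G, T.Cond p) ∧
  (∀ p ∈ G, ∀ q : ZFSet.{u}, T.Cond q → Tle p q → q ∈ G) ∧
  (∀ p ∈ G, ∀ q ∈ G, ∃ r ∈ G, Tle r p ∧ Tle r q) ∧
  (∀ A : Set ZFSet.{u}, T.MaxAC A → ∃ p ∈ A, p ∈ G)

/-- `p` forces `q ∈ G`: every condition below `p` is compatible with `q`. -/
def Forces (p q : ZFSet.{u}) : Prop :=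
  ∀ r : ZFSet.{u}, T.Cond r → Tle r p → T.Compat r q

end TowerZ

/-- `p` and `q` are disjoint conditions: for any `Z ∈ V_δ` containing `⋃ p` and
`⋃ q`, no `a ⊆ Z` satisfies both `a ∩ ⋃ p ∈ p` and `a ∩ ⋃ q ∈ q`. -/
def Disj (δ : Ordinal.{u}) (p q : ZFSet.{u}) : Prop :=
  ∀ Z : ZFSet.{u}, Z.rank < δ → ZFSet.sUnion p ⊆ Z → ZFSet.sUnion q ⊆ Z →
    ∀ a ∈ Z.powerset, ¬ (a ∩ ZFSet.sUnion p ∈ p ∧ a ∩ ZFSet.sUnion q ∈ q)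

/-!
Refine each `p ∈ A` to `q_p = disjointify A p`, the condition of all `d ⊆ V_(rank p + 1)`
with `d ∩ ⋃ p ∈ p` that contain `p` itself as a marker and, for every other `x ∈ A ∩ d`, do
not project into both `p` and `x`. For a single `x` the excluded set is null, since its
positivity would make `p` and `x` compatible; normality lets us exclude all
`x ∈ V_(rank p + 1)` at once, so `q_p` is `p` up to a null set and `q_p ∼ p`. If
`rank p' ≤ rank p`, any `a` projecting into both `q_p` and `q_p'` carries the marker `p'`
inside `V_(rank p + 1)` while projecting into `p` and `p'`, which `q_p` forbids: the
refinements are pairwise disjoint.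
-/

open ZFSet Order

section SetLemmas

variable {a b c W Z B : ZFSet.{u}}

theorem ZFSet.sUnion_subset_of_subset_powerset (h : B ⊆ W.powerset) : ⋃₀ B ⊆ W := by
  intro y hy
  obtain ⟨c, hc, hyc⟩ := mem_sUnion.1 hy
  exact mem_powerset.1 (h hc) hyc

theorem ZFSet.subset_powerset_sUnion (B : ZFSet.{u}) : B ⊆ (⋃₀ B).powerset :=
  fun _ hc => mem_powerset.2 fun _ hy => mem_sUnion_of_mem hy hc

theorem ZFSet.inter_inter_eq_of_subset (h : c ⊆ b) : a ∩ b ∩ c = a ∩ c := by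
  ext y
  simp only [mem_inter]
  exact ⟨fun hy => ⟨hy.1.1, hy.2⟩, fun hy => ⟨⟨hy.1, h hy.2⟩, hy.2⟩⟩

def liftSet (Z W B : ZFSet.{u}) : ZFSet.{u} :=
  Z.powerset.sep fun a => a ∩ W ∈ B

@[simp]
theorem mem_liftSet : a ∈ liftSet Z W B ↔ a ⊆ Z ∧ a ∩ W ∈ B := by
  simp [liftSet]

theorem liftSet_subset_powerset : liftSet Z W B ⊆ Z.powerset :=
  sep_subset

theorem powerset_sdiff_liftSet :
    Z.powerset \ liftSet Z W B = liftSet Z W (W.powerset \ B) := by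
  ext a
  simp only [mem_sdiff, mem_powerset, mem_liftSet, not_and]
  exact ⟨fun h => ⟨h.1, fun y hy => (mem_inter.1 hy).2, h.2 h.1⟩,
    fun h => ⟨h.1, fun _ => h.2.2⟩⟩

theorem sUnion_subset_vonNeumann_succ {p x : ZFSet.{u}} (h : x.rank ≤ p.rank) :
    ⋃₀ x ⊆ V_ (succ p.rank) :=
  subset_vonNeumann.2 ((rank_sUnion_le x).trans (h.trans (le_succ _)))

end SetLemmas

theorem Tle.refl (p : ZFSet.{u}) : Tle p p :=
  ⟨subset_rfl, fun a ha => by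
    rwa [inter_eq_left_of_subset (mem_powerset.1 (subset_powerset_sUnion p ha))]⟩

theorem Tle.trans {p q r : ZFSet.{u}} (hpq : Tle p q) (hqr : Tle q r) : Tle p r :=
  ⟨hqr.1.trans hpq.1, fun a ha => by
    rw [← inter_inter_eq_of_subset hqr.1]
    exact hqr.2 _ (hpq.2 a ha)⟩

theorem Disj.symm {δ : Ordinal.{u}} {p q : ZFSet.{u}} (h : Disj δ p q) : Disj δ q p :=
  fun Z hZ hq hp a ha hqp => h Z hZ hp hq a ha hqp.symm

namespace IsNormalFilterZ

variable {X : ZFSet.{u}} {F : Set ZFSet.{u}} (hF : IsNormalFilterZ X F)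
include hF

theorem powerset_mem : X.powerset ∈ F := by
  convert hF.normal _ hF.fine using 1
  ext a
  simp +contextual [mem_sep]

theorem diag_mem {Q : ZFSet.{u} → Prop} {C : ZFSet.{u} → ZFSet.{u}}
    (hC : ∀ x ∈ X, Q x → C x ∈ F) :
    X.powerset.sep (fun a => ∀ x ∈ a, Q x → a ∈ C x) ∈ F := by
  classical
  have hmem : ∀ x ∈ X, (if Q x then C x else X.powerset) ∈ F := fun x hx => by
    split_ifs with hQ
    exacts [hC x hx hQ, hF.powerset_mem]
  convert hF.normal _ hmem using 1
  ext a
  simp only [mem_sep]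
  refine and_congr_right fun ha => forall₂_congr fun x _ => ?_
  split_ifs with hQ <;> simp [hQ, ha]

end IsNormalFilterZ

namespace TowerZ

variable {δ : Ordinal.{u}} (T : TowerZ δ) {p q r X Z W B : ZFSet.{u}}

theorem liftSet_mem_iff (hW : W.rank < δ) (hZ : Z.rank < δ) (hWZ : W ⊆ Z)
    (hB : B ⊆ W.powerset) : liftSet Z W B ∈ T.F Z ↔ B ∈ T.F W :=
  (T.projects W Z hW hZ hWZ B hB).symm

theorem pos_liftSet_iff (hW : W.rank < δ) (hZ : Z.rank < δ) (hWZ : W ⊆ Z)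
    (hB : B ⊆ W.powerset) : T.Pos Z (liftSet Z W B) ↔ T.Pos W B := by
  change _ ∧ Z.powerset \ _ ∉ _ ↔ _ ∧ W.powerset \ _ ∉ _
  rw [powerset_sdiff_liftSet, T.liftSet_mem_iff hW hZ hWZ fun _ ha => (mem_sdiff.1 ha).1]
  exact ⟨fun h => ⟨hB, h.2⟩, fun h => ⟨liftSet_subset_powerset, h.2⟩⟩

theorem Pos.of_inter_subset {S S' C : ZFSet.{u}} (hX : X.rank < δ) (hS : T.Pos X S)
    (hC : C ∈ T.F X) (hS' : S' ⊆ X.powerset) (h : ∀ a ∈ S, a ∈ C → a ∈ S') :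
    T.Pos X S' := by
  refine ⟨hS', fun hS'c => hS.2 ?_⟩
  have hN := T.normal X hX
  refine hN.superset_mem _ (hN.inter_mem _ hS'c _ hC) _ (fun a ha => ?_) sep_subset
  simp only [mem_inter, mem_sep] at ha ⊢
  exact ⟨ha.1.1, fun haS => ha.1.2 (h a haS ha.2)⟩

theorem Pos.nonempty {S : ZFSet.{u}} (hX : X.rank < δ) (hS : T.Pos X S) : ∃ a, a ∈ S := by
  by_contra! h
  refine hS.2 ?_
  convert (T.normal X hX).powerset_mem using 1
  ext a
  simp [mem_sep, h]

theorem Pos.exists_mem_of_mem {S y : ZFSet.{u}} (hX : X.rank < δ) (hS : T.Pos X S)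
    (hy : y ∈ X) : ∃ a ∈ S, y ∈ a := by
  have hpos : T.Pos X (X.powerset.sep fun a => a ∈ S ∧ y ∈ a) :=
    hS.of_inter_subset T hX ((T.normal X hX).fine y hy) sep_subset fun a haS hay => by
      simp only [mem_sep] at hay ⊢
      exact ⟨hay.1, haS, hay.2⟩
  obtain ⟨a, ha⟩ := hpos.nonempty T hX
  exact ⟨a, (mem_sep.1 ha).2⟩

theorem Pos.sUnion_eq {S : ZFSet.{u}} (hX : X.rank < δ) (hS : T.Pos X S) : ⋃₀ S = X := by
  refine subset_antisymm (sUnion_subset_of_subset_powerset hS.1) fun y hy => ?_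
  obtain ⟨a, ha, hya⟩ := hS.exists_mem_of_mem T hX hy
  exact mem_sUnion_of_mem hya ha

theorem Pos.tle (hZ : Z.rank < δ) (hr : T.Pos Z r) (hpZ : ⋃₀ p ⊆ Z)
    (h : ∀ a ∈ r, a ∩ ⋃₀ p ∈ p) : Tle r p :=
  ⟨(hr.sUnion_eq T hZ).symm ▸ hpZ, h⟩

theorem Cond.pos_sUnion (hp : T.Cond p) : (⋃₀ p).rank < δ ∧ T.Pos (⋃₀ p) p := by
  obtain ⟨X, hX, hpX⟩ := hp
  have hUX : ⋃₀ p ⊆ X := sUnion_subset_of_subset_powerset hpX.1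
  have hU : (⋃₀ p).rank < δ := (rank_mono hUX).trans_lt hX
  refine ⟨hU, (T.pos_liftSet_iff hU hX hUX (subset_powerset_sUnion p)).1 ?_⟩
  refine hpX.of_inter_subset T hX (T.normal X hX).powerset_mem liftSet_subset_powerset
    fun a ha _ => ?_
  rw [mem_liftSet, inter_eq_left_of_subset (mem_powerset.1 (subset_powerset_sUnion p ha))]
  exact ⟨mem_powerset.1 (hpX.1 ha), ha⟩

theorem Cond.pos_liftSet (hp : T.Cond p) (hZ : Z.rank < δ) (hpZ : ⋃₀ p ⊆ Z) :
    T.Pos Z (liftSet Z (⋃₀ p) p) :=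
  (T.pos_liftSet_iff (hp.pos_sUnion T).1 hZ hpZ (subset_powerset_sUnion p)).2
    (hp.pos_sUnion T).2

theorem compat_of_pos_inter (hZ : Z.rank < δ) (hpZ : ⋃₀ p ⊆ Z) (hqZ : ⋃₀ q ⊆ Z)
    (h : T.Pos Z (liftSet Z (⋃₀ p) p ∩ liftSet Z (⋃₀ q) q)) : T.Compat p q :=
  ⟨_, ⟨Z, hZ, h⟩, h.tle T hZ hpZ fun _ ha => (mem_liftSet.1 (mem_inter.1 ha).1).2,
    h.tle T hZ hqZ fun _ ha => (mem_liftSet.1 (mem_inter.1 ha).2).2⟩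

theorem sdiff_inter_liftSet_mem (hZ : Z.rank < δ) (hpZ : ⋃₀ p ⊆ Z) (hqZ : ⋃₀ q ⊆ Z)
    (h : ¬T.Compat p q) :
    Z.powerset \ (liftSet Z (⋃₀ p) p ∩ liftSet Z (⋃₀ q) q) ∈ T.F Z := by
  by_contra hnull
  exact h (T.compat_of_pos_inter hZ hpZ hqZ
    ⟨fun a ha => liftSet_subset_powerset (mem_inter.1 ha).1, hnull⟩)

theorem not_compat_of_disj (h : Disj δ p q) : ¬T.Compat p q := by
  rintro ⟨r, ⟨X, hX, hr⟩, hrp, hrq⟩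
  obtain ⟨a, ha⟩ := hr.nonempty T hX
  rw [← hr.sUnion_eq T hX] at hX
  exact h _ hX hrp.1 hrq.1 a (subset_powerset_sUnion r ha) ⟨hrp.2 a ha, hrq.2 a ha⟩

theorem Cond.succ_rank_lt (hδ : IsSuccLimit δ) (hp : T.Cond p) : succ p.rank < δ := by
  obtain ⟨X, hX, hpX, -⟩ := hp
  have hpX' : p.rank ≤ succ X.rank := rank_powerset X ▸ rank_mono hpX
  exact hδ.succ_lt (hpX'.trans_lt (hδ.succ_lt hX))

theorem _root_.Tle.forces (hpq : Tle p q) : T.Forces p q :=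
  fun r hr hrp => ⟨r, hr, Tle.refl r, hrp.trans hpq⟩

theorem MaxAC.eq_of_tle {A : Set ZFSet.{u}} (hA : T.MaxAC A) {p p' : ZFSet.{u}}
    (hp : p ∈ A) (hp' : p' ∈ A) (hr : T.Cond r) (hrp : Tle r p) (hrp' : Tle r p') :
    p = p' := by
  by_contra hne
  exact hA.2.1 p hp p' hp' hne ⟨r, hr, hrp, hrp'⟩

end TowerZ

def SinglesOut (A : Set ZFSet.{u}) (p d : ZFSet.{u}) : Prop :=
  p ∈ d ∧ ∀ x ∈ d, x ∈ A → x ≠ p → ¬(d ∩ ⋃₀ p ∈ p ∧ d ∩ ⋃₀ x ∈ x)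

noncomputable def disjointify (A : Set ZFSet.{u}) (p : ZFSet.{u}) : ZFSet.{u} :=
  liftSet (V_ (succ p.rank)) (⋃₀ p) p ∩ (V_ (succ p.rank)).powerset.sep (SinglesOut A p)

namespace TowerZ

variable {δ : Ordinal.{u}} (T : TowerZ δ) (hδ : IsSuccLimit δ)
  {A : Set ZFSet.{u}} (hA : T.MaxAC A) {p : ZFSet.{u}} (hp : p ∈ A)
include hδ hA hp

theorem rank_vonNeumann_succ_lt : (V_ (succ p.rank)).rank < δ := by
  rw [rank_vonNeumann]
  exact (hA.1 p hp).succ_rank_lt T hδ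

theorem singlesOut_mem :
    (V_ (succ p.rank)).powerset.sep (SinglesOut A p) ∈ T.F (V_ (succ p.rank)) := by
  have hZ := rank_vonNeumann_succ_lt T hδ hA hp
  have hN := T.normal _ hZ
  have hpZ := sUnion_subset_vonNeumann_succ (le_refl p.rank)
  have hdiag := hN.diag_mem (Q := fun x => x ∈ A ∧ x ≠ p) fun x hx hxA =>
    T.sdiff_inter_liftSet_mem hZ hpZ
      (sUnion_subset_vonNeumann_succ (lt_succ_iff.1 (mem_vonNeumann.1 hx)))
      (hA.2.1 p hp x hxA.1 hxA.2.symm)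
  refine hN.superset_mem _ (hN.inter_mem _ (hN.fine p (mem_vonNeumann_succ p)) _ hdiag) _
    (fun d hd => ?_) sep_subset
  simp only [mem_inter, mem_sep] at hd
  refine mem_sep.2 ⟨hd.1.1, hd.1.2, fun x hxd hxA hxp hboth => ?_⟩
  have hdZ := mem_powerset.1 hd.1.1
  exact (mem_sdiff.1 (hd.2.2 x hxd ⟨hxA, hxp⟩)).2
    (mem_inter.2 ⟨mem_liftSet.2 ⟨hdZ, hboth.1⟩, mem_liftSet.2 ⟨hdZ, hboth.2⟩⟩)

theorem disjointify_pos : T.Pos (V_ (succ p.rank)) (disjointify A p) := by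
  have hZ := rank_vonNeumann_succ_lt T hδ hA hp
  have hlift := (hA.1 p hp).pos_liftSet T hZ (sUnion_subset_vonNeumann_succ le_rfl)
  exact hlift.of_inter_subset T hZ (singlesOut_mem T hδ hA hp)
    (fun d hd => liftSet_subset_powerset (mem_inter.1 hd).1)
    fun d hd hd' => mem_inter.2 ⟨hd, hd'⟩

theorem sUnion_disjointify : ⋃₀ disjointify A p = V_ (succ p.rank) :=
  (disjointify_pos T hδ hA hp).sUnion_eq T (rank_vonNeumann_succ_lt T hδ hA hp)

theorem disjointify_cond : T.Cond (disjointify A p) :=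
  ⟨_, rank_vonNeumann_succ_lt T hδ hA hp, disjointify_pos T hδ hA hp⟩

theorem disjointify_tle : Tle (disjointify A p) p :=
  (disjointify_pos T hδ hA hp).tle T (rank_vonNeumann_succ_lt T hδ hA hp)
    (sUnion_subset_vonNeumann_succ le_rfl) fun _ hd => (mem_liftSet.1 (mem_inter.1 hd).1).2

theorem forces_disjointify : T.Forces p (disjointify A p) := by
  intro s hs hsp
  have hq : ⋃₀ disjointify A p = V_ (succ p.rank) := sUnion_disjointify T hδ hA hp
  set Zp := V_ (succ p.rank)
  have hZp : Zp.rank < δ := rank_vonNeumann_succ_lt T hδ hA hp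
  obtain ⟨hUs, -⟩ := hs.pos_sUnion T
  set Z := ⋃₀ s ∪ Zp
  have hZ : Z.rank < δ := by rw [rank_union]; exact max_lt hUs hZp
  have hsZ : ⋃₀ s ⊆ Z := fun y hy => mem_union.2 (Or.inl hy)
  have hZpZ : Zp ⊆ Z := fun y hy => mem_union.2 (Or.inr hy)
  have hmarked : liftSet Z Zp (Zp.powerset.sep (SinglesOut A p)) ∈ T.F Z :=
    (T.liftSet_mem_iff hZp hZ hZpZ sep_subset).2 (singlesOut_mem T hδ hA hp)
  refine T.compat_of_pos_inter hZ hsZ (hq ▸ hZpZ)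
    ((hs.pos_liftSet T hZ hsZ).of_inter_subset T hZ hmarked
      (fun a ha => liftSet_subset_powerset (mem_inter.1 ha).1) fun a has ham => ?_)
  rw [hq]
  rw [mem_liftSet] at has ham
  refine mem_inter.2 ⟨mem_liftSet.2 has, mem_liftSet.2 ⟨has.1, mem_inter.2 ⟨?_, ham.2⟩⟩⟩
  have hUp : a ∩ Zp ∩ ⋃₀ p = a ∩ ⋃₀ s ∩ ⋃₀ p := by
    rw [inter_inter_eq_of_subset (sUnion_subset_vonNeumann_succ le_rfl),
      inter_inter_eq_of_subset hsp.1]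
  refine mem_liftSet.2 ⟨fun y hy => (mem_inter.1 hy).2, ?_⟩
  rw [hUp]
  exact hsp.2 _ has.2

omit hp in
theorem disj_disjointify_of_rank_le {p p' : ZFSet.{u}} (hp : p ∈ A) (hp' : p' ∈ A)
    (hne : p ≠ p') (hrank : p'.rank ≤ p.rank) :
    Disj δ (disjointify A p) (disjointify A p') := by
  intro _ _ _ _ a _ ⟨hap, hap'⟩
  rw [sUnion_disjointify T hδ hA hp] at hap
  rw [sUnion_disjointify T hδ hA hp'] at hap'
  simp only [disjointify, mem_inter, mem_liftSet, mem_sep] at hap hap'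
  have hp'a : p' ∈ a ∩ V_ (succ p.rank) :=
    mem_inter.2 ⟨(mem_inter.1 hap'.2.2.1).1, mem_vonNeumann.2 (lt_succ_iff.2 hrank)⟩
  refine hap.2.2.2 p' hp'a hp' hne.symm ⟨hap.1.2, ?_⟩
  rw [inter_inter_eq_of_subset (sUnion_subset_vonNeumann_succ hrank),
    ← inter_inter_eq_of_subset (sUnion_subset_vonNeumann_succ le_rfl)]
  exact hap'.1.2

omit hp in
theorem disj_disjointify {p p' : ZFSet.{u}} (hp : p ∈ A) (hp' : p' ∈ A) (hne : p ≠ p') :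
    Disj δ (disjointify A p) (disjointify A p') := by
  rcases le_total p'.rank p.rank with h | h
  · exact disj_disjointify_of_rank_le T hδ hA hp hp' hne h
  · exact (disj_disjointify_of_rank_le T hδ hA hp' hp hne.symm h).symm

end TowerZ

/-- Let `P` be a tower of height `δ = κ.ord` with `κ` inaccessible.  Every maximal
antichain `A` of `P` has a disjoint maximal antichain `B` refining it; moreover if
`q ∈ B`, `p ∈ A` and `q ≤ p`, then `q ∼ p` (each forces the other into the generic
filter). -/
theorem stmt14 (κ : Cardinal.{u}) (hκ : κ.IsInaccessible) (T : TowerZ κ.ord)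
    (A : Set ZFSet.{u}) (hA : T.MaxAC A) :
    ∃ B : Set ZFSet.{u}, T.MaxAC B ∧
      (∀ q ∈ B, ∀ q' ∈ B, q ≠ q' → Disj κ.ord q q') ∧
      (∀ q ∈ B, ∃ p ∈ A, Tle q p) ∧
      (∀ q ∈ B, ∀ p ∈ A, Tle q p → T.Forces q p ∧ T.Forces p q) := by
  have hδ : IsSuccLimit κ.ord := Cardinal.isSuccLimit_ord hκ.aleph0_lt.le
  have hdisj : ∀ q ∈ disjointify A '' A, ∀ q' ∈ disjointify A '' A, q ≠ q' →
      Disj κ.ord q q' := by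
    rintro _ ⟨p, hp, rfl⟩ _ ⟨p', hp', rfl⟩ hne
    exact T.disj_disjointify hδ hA hp hp' (ne_of_apply_ne _ hne)
  refine ⟨disjointify A '' A, ⟨?_, fun q hq q' hq' hne => T.not_compat_of_disj
    (hdisj q hq q' hq' hne), ?_⟩, hdisj, ?_, ?_⟩
  · rintro _ ⟨p, hp, rfl⟩
    exact T.disjointify_cond hδ hA hp
  · intro r hr
    obtain ⟨p, hp, s, hs, hsr, hsp⟩ := hA.2.2 r hr
    obtain ⟨t, ht, hts, htq⟩ := T.forces_disjointify hδ hA hp s hs hsp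
    exact ⟨_, ⟨p, hp, rfl⟩, t, ht, hts.trans hsr, htq⟩
  · rintro _ ⟨p, hp, rfl⟩
    exact ⟨p, hp, T.disjointify_tle hδ hA hp⟩
  · rintro _ ⟨p, hp, rfl⟩ p' hp' hqp'
    obtain rfl : p = p' := hA.eq_of_tle T hp hp' (T.disjointify_cond hδ hA hp)
      (T.disjointify_tle hδ hA hp) hqp'
    exact ⟨hqp'.forces T, T.forces_disjointify hδ hA hp⟩
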